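/- arXiv:1502.07165 — 3 statements merged into one kernel-verified Lean document; each statement's English description precedes it below -/
import Mathlib

section
/- For all n ≥ 2, the coefficient of y^{(n−2)} in the expansion of Ψⁿ[y] is given in closed form by Kₙ² = r^{n−2} · [ (n choose 2)·Ψ[s] + (n choose 3)·( 3·s·r' + r·r'' + ((3n−5)/4)·r'² ) ] (as functions on ℝ), where Ψ[s] = r·s' + s². -/
noncomputable def Psi (r s : ℝ → ℝ) (y : ℝ → ℝ) : ℝ → ℝ :=
  fun x => r x * deriv y x + s x * y x

noncomputable def PsiIter (r s : ℝ → ℝ) : ℕ → (ℝ → ℝ) → (ℝ → ℝ)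
  | 0, y => y
  | n + 1, y => PsiIter r s n (Psi r s y)

noncomputable def Kcoef (r s : ℝ → ℝ) : ℕ → ℤ → (ℝ → ℝ)
  | 0, j => if j = 0 then 1 else 0
  | n + 1, j =>
      if j < 0 ∨ (n + 1 : ℤ) < j then 0
      else fun x => r x * Kcoef r s n j x + Psi r s (Kcoef r s n (j - 1)) x

lemma Kneg (r s : ℝ → ℝ) (n : ℕ) : Kcoef r s n (-1) = fun _ => 0 := by
  cases n with
  | zero => funext x; simp [Kcoef]
  | succ k => funext x; simp [Kcoef]

lemma Kzero (r s : ℝ → ℝ) (n : ℕ) : Kcoef r s n 0 = fun x => r x ^ n := by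
  induction n with
  | zero => funext x; simp [Kcoef]
  | succ k ih =>
    have hc : ¬((0:ℤ) < 0 ∨ ((k:ℤ) + 1) < 0) := by omega
    rw [Kcoef, if_neg hc]
    funext x
    rw [ih]
    norm_num [Kneg, Psi]
    ring

lemma Kone (r s : ℝ → ℝ) (hr : ContDiff ℝ (⊤ : ℕ∞) r) (n : ℕ) :
    Kcoef r s (n+1) 1 = fun x =>
      r x ^ n * ((n+1 : ℝ) * s x + (((n+1).choose 2 : ℕ) : ℝ) * deriv r x) := by
  induction n with
  | zero =>
    have hc : ¬((1:ℤ) < 0 ∨ ((0:ℕ):ℤ) + 1 < 1) := by norm_num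
    rw [Kcoef, if_neg hc]
    funext x
    have h0 : Kcoef r s 0 (1-1) = fun _ => (1:ℝ) := by funext y; simp [Kcoef]
    have h1 : Kcoef r s 0 1 = fun _ => (0:ℝ) := by funext y; simp [Kcoef]
    rw [h0, h1]
    simp [Psi]
  | succ k ih =>
    have hc : ¬((1:ℤ) < 0 ∨ ((k+1:ℕ):ℤ) + 1 < 1) := by omega
    rw [Kcoef, if_neg hc]
    funext x
    show r x * Kcoef r s (k+1) 1 x + Psi r s (Kcoef r s (k+1) (1-1)) x = _
    norm_num [Kzero, ih, Psi]
    have hd : deriv (fun x => r x ^ (k+1)) x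
        = ((k+1 : ℕ) : ℝ) * r x ^ k * deriv r x := by
      have := ((hr.differentiable (by simp) x).hasDerivAt.pow (k+1)).deriv
      simp at this; exact_mod_cast this
    rw [hd]
    have hch : ((k+2).choose 2 : ℝ) = ((k+1).choose 2 : ℝ) + (k+1 : ℝ) := by
      rw [Nat.choose_succ_succ, Nat.choose_one_right]; push_cast; ring
    rw [hch]
    push_cast
    ring

lemma choose_two_real (m : ℕ) : ((m.choose 2 : ℕ) : ℝ) = m * (m - 1) / 2 := by
  induction m with
  | zero => simp
  | succ k ih =>
    rw [Nat.choose_succ_succ, Nat.choose_one_right]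
    push_cast [ih]
    ring

lemma choose_three_real (m : ℕ) : ((m.choose 3 : ℕ) : ℝ) = m * (m - 1) * (m - 2) / 6 := by
  induction m with
  | zero => simp
  | succ k ih =>
    rw [Nat.choose_succ_succ]
    push_cast [ih, choose_two_real]
    ring

lemma deriv_aux (r s : ℝ → ℝ) (hr : ContDiff ℝ (⊤ : ℕ∞) r) (hs : ContDiff ℝ (⊤ : ℕ∞) s)
    (m : ℕ) (a c : ℝ) (x : ℝ) :
    deriv (fun y => r y ^ m * (a * s y + c * deriv r y)) x =
      ((m : ℝ) * r x ^ (m-1) * deriv r x) * (a * s x + c * deriv r x) +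
        r x ^ m * (a * deriv s x + c * deriv (deriv r) x) := by
  have h : HasDerivAt (fun y => r y ^ m * (a * s y + c * deriv r y))
      (((m : ℝ) * r x ^ (m-1) * deriv r x) * (a * s x + c * deriv r x) +
        r x ^ m * (a * deriv s x + c * deriv (deriv r) x)) x :=
    ((hr.differentiable (by simp) x).hasDerivAt.pow m).mul
      (((hs.differentiable (by simp) x).hasDerivAt.const_mul a).add
        (((contDiff_infty_iff_deriv.mp (hr.of_le (by simp))).2.differentiable (by simp) x).hasDerivAt.const_mul c))
  exact h.deriv

lemma Ktwo (r s : ℝ → ℝ) (hr : ContDiff ℝ (⊤ : ℕ∞) r) (hs : ContDiff ℝ (⊤ : ℕ∞) s) (n : ℕ) :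
    Kcoef r s (n+2) 2 = fun x =>
      r x ^ n *
        ((((n+2).choose 2 : ℕ) : ℝ) * (r x * deriv s x + s x ^ 2) +
          (((n+2).choose 3 : ℕ) : ℝ) *
            (3 * s x * deriv r x + r x * deriv (deriv r) x +
              ((3 * ((n : ℝ) + 2) - 5) / 4) * (deriv r x) ^ 2)) := by
  induction n with
  | zero =>
    have hc : ¬((2:ℤ) < 0 ∨ ((1:ℕ):ℤ) + 1 < 2) := by omega
    rw [Kcoef, if_neg hc]
    funext x
    show r x * Kcoef r s 1 2 x + Psi r s (Kcoef r s 1 (2-1)) x = _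
    have h2 : Kcoef r s 1 2 = fun _ => (0:ℝ) := by
      have : ((2:ℤ) < 0 ∨ ((0:ℕ):ℤ) + 1 < 2) := by omega
      rw [Kcoef, if_pos this]; rfl
    have h1 : Kcoef r s 1 (2-1) = s := by
      have : (2 - 1 : ℤ) = 1 := by norm_num
      rw [this, Kone r s hr 0]
      funext y; simp
    rw [h1, h2]
    simp [Psi, Nat.choose]
    ring
  | succ k ih =>
    have hc : ¬((2:ℤ) < 0 ∨ ((k+2:ℕ):ℤ) + 1 < 2) := by omega
    rw [Kcoef, if_neg hc]
    funext x
    show r x * Kcoef r s (k+2) 2 x + Psi r s (Kcoef r s (k+2) (2-1)) x = _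
    have h21 : (2 - 1 : ℤ) = 1 := by norm_num
    rw [h21, ih, Kone r s hr (k+1)]
    simp only [Psi]
    rw [deriv_aux r s hr hs (k+1) _ _ x]
    simp only [Nat.add_sub_cancel]
    rw [choose_two_real, choose_three_real, choose_two_real, choose_three_real]
    push_cast
    ring

/-- For all n ≥ 2, Kₙ² = r^{n−2}·[C(n,2)·Ψ[s] + C(n,3)·(3sr' + rr'' + ((3n−5)/4)r'²)],
where Ψ[s] = r·s' + s². -/
theorem K_n_2_closed_form (r s : ℝ → ℝ)
    (hr : ContDiff ℝ (⊤ : ℕ∞) r) (hs : ContDiff ℝ (⊤ : ℕ∞) s)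
    (n : ℕ) (hn : 2 ≤ n) (x : ℝ) :
    Kcoef r s n 2 x =
      r x ^ (n - 2) *
        ((n.choose 2 : ℝ) * (r x * deriv s x + s x ^ 2) +
          (n.choose 3 : ℝ) *
            (3 * s x * deriv r x + r x * deriv (deriv r) x +
              ((3 * (n : ℝ) - 5) / 4) * (deriv r x) ^ 2)) := by
  obtain ⟨m, rfl⟩ : ∃ m, n = m + 2 := ⟨n - 2, by omega⟩
  rw [Ktwo r s hr hs m]
  simp only [Nat.add_sub_cancel]
  push_cast
  ring
end

section
/- Let n ≥ 1, let u, v, q : ℝ → ℝ be smooth with u nonvanishing, u'' + q·u = 0 and v'' + q·v = 0 on ℝ, and with Wronskian normalized to one: u·v' − u'·v = 1 on ℝ. Take r = u² and s = −(n−1)·u·u'. Then for each k with 0 ≤ k ≤ n−1, the function y_k(x) = u(x)^{n−1−k} · v(x)^k satisfies Ψⁿ[y_k] = 0 identically on ℝ. -/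
lemma Psi_zero (r s : ℝ → ℝ) : Psi r s (fun _ => (0:ℝ)) = fun _ => 0 := by
  funext x; simp [Psi]

lemma PsiIter_zero_fun (r s : ℝ → ℝ) (m : ℕ) :
    PsiIter r s m (fun _ => (0:ℝ)) = fun _ => 0 := by
  induction m with
  | zero => rfl
  | succ m ih => rw [PsiIter, Psi_zero]; exact ih

lemma PsiIter_add (r s : ℝ → ℝ) (a b : ℕ) (y : ℝ → ℝ) :
    PsiIter r s (a + b) y = PsiIter r s a (PsiIter r s b y) := by
  induction b generalizing y with
  | zero => rfl
  | succ b ih =>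
      rw [show a + (b+1) = (a+b)+1 from rfl, PsiIter, ih]
      rfl

lemma Psi_const_mul (r s y : ℝ → ℝ) (c : ℝ) :
    Psi r s (fun t => c * y t) = fun x => c * Psi r s y x := by
  funext x
  simp only [Psi, deriv_const_mul_field]
  ring

lemma PsiIter_const_mul (r s : ℝ → ℝ) (m : ℕ) (y : ℝ → ℝ) (c : ℝ) :
    PsiIter r s m (fun t => c * y t) = fun x => c * PsiIter r s m y x := by
  induction m generalizing y with
  | zero => rfl
  | succ m ih =>
      rw [PsiIter, Psi_const_mul, ih]
      rfl

lemma step (n : ℕ) (hn : 1 ≤ n) (u v : ℝ → ℝ)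
    (hu : ContDiff ℝ (⊤ : ℕ∞) u) (hv : ContDiff ℝ (⊤ : ℕ∞) v)
    (hu0 : ∀ x : ℝ, u x ≠ 0)
    (hwr : ∀ x : ℝ, u x * deriv v x - deriv u x * v x = 1)
    (j : ℕ) (hj : j ≤ n - 1) :
    Psi (fun t => u t ^ 2) (fun t => -((n : ℝ) - 1) * u t * deriv u t)
      (fun t => u t ^ (n - 1 - j) * v t ^ j)
      = fun x => (j : ℝ) * (u x ^ (n - j) * v x ^ (j - 1)) := by
  funext x
  have hdu : HasDerivAt u (deriv u x) x := ((hu.differentiable (by simp)) x).hasDerivAt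
  have hdv : HasDerivAt v (deriv v x) x := ((hv.differentiable (by simp)) x).hasDerivAt
  have h1 : HasDerivAt (fun t => u t ^ (n-1-j) * v t ^ j)
      ((↑(n-1-j) * u x ^ (n-1-j-1) * deriv u x) * v x ^ j
        + u x ^ (n-1-j) * (↑j * v x ^ (j-1) * deriv v x)) x :=
    (hdu.pow _).mul (hdv.pow _)
  simp only [Psi, h1.deriv]
  have hv' : deriv v x = (1 + deriv u x * v x) / u x := by
    rw [eq_div_iff (hu0 x)]
    linear_combination hwr x
  rw [hv']
  rcases Nat.eq_zero_or_pos j with rfl | hjpos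
  · obtain ⟨m, rfl⟩ : ∃ m, n = m + 1 := ⟨n - 1, by omega⟩
    rcases Nat.eq_zero_or_pos m with rfl | hmpos
    · norm_num
    · obtain ⟨c, rfl⟩ : ∃ c, m = c + 1 := ⟨m - 1, by omega⟩
      have e1 : c + 1 + 1 - 1 - 0 = c + 1 := by omega
      have e2 : c + 1 + 1 - 1 - 0 - 1 = c := by omega
      have e3 : c + 1 + 1 - 0 = c + 2 := by omega
      simp only [e1, e2, e3, Nat.cast_zero, pow_zero, zero_mul]
      push_cast
      field_simp [hu0 x]
      ring
  · obtain ⟨j', rfl⟩ : ∃ j', j = j' + 1 := ⟨j - 1, by omega⟩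
    obtain ⟨a, hna⟩ : ∃ a, n = a + j' + 2 := ⟨n - j' - 2, by omega⟩
    subst hna
    have e1 : a + j' + 2 - 1 - (j' + 1) = a := by omega
    have e2 : a + j' + 2 - (j' + 1) = a + 1 := by omega
    have e3 : j' + 1 - 1 = j' := by omega
    simp only [e1, e2, e3]
    rcases Nat.eq_zero_or_pos a with rfl | hapos
    · simp only [Nat.cast_zero, pow_zero, zero_mul]
      push_cast
      field_simp [hu0 x]
      ring
    · obtain ⟨b, rfl⟩ : ∃ b, a = b + 1 := ⟨a - 1, by omega⟩
      have e4 : b + 1 - 1 = b := by omega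
      simp only [e4]
      push_cast
      field_simp [hu0 x]
      ring

/-- With r = u², s = −(n−1)uu', u and v independent solutions of the source
equation with unit Wronskian, each y_k = u^{n−1−k}·v^k solves Ψⁿ[y_k] = 0. -/
theorem solutions_uv (n : ℕ) (hn : 1 ≤ n)
    (u v q : ℝ → ℝ)
    (hu : ContDiff ℝ (⊤ : ℕ∞) u) (hv : ContDiff ℝ (⊤ : ℕ∞) v) (hq : ContDiff ℝ (⊤ : ℕ∞) q)
    (hu0 : ∀ x : ℝ, u x ≠ 0)
    (hodeu : ∀ x : ℝ, deriv (deriv u) x + q x * u x = 0)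
    (hodev : ∀ x : ℝ, deriv (deriv v) x + q x * v x = 0)
    (hwr : ∀ x : ℝ, u x * deriv v x - deriv u x * v x = 1)
    (k : ℕ) (hk : k ≤ n - 1) (x : ℝ) :
    PsiIter (fun t => u t ^ 2) (fun t => -((n : ℝ) - 1) * u t * deriv u t) n
      (fun t => u t ^ (n - 1 - k) * v t ^ k) x = 0 := by
  set r : ℝ → ℝ := fun t => u t ^ 2 with hr
  set s : ℝ → ℝ := fun t => -((n : ℝ) - 1) * u t * deriv u t with hs
  -- key claim: PsiIter (j+1) y_j = 0 for j ≤ n-1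
  have key : ∀ j : ℕ, j ≤ n - 1 →
      PsiIter r s (j + 1) (fun t => u t ^ (n - 1 - j) * v t ^ j) = fun _ => 0 := by
    intro j
    induction j with
    | zero =>
        intro _
        show PsiIter r s 0 (Psi r s _) = _
        rw [step n hn u v hu hv hu0 hwr 0 (by omega)]
        norm_num
        rfl
    | succ j ih =>
        intro hj1
        show PsiIter r s (j + 1) (Psi r s _) = _
        rw [step n hn u v hu hv hu0 hwr (j+1) hj1]
        have e2 : n - (j+1) = n - 1 - j := by omega
        have e3 : (j + 1) - 1 = j := by omega
        simp only [e2, e3]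
        rw [PsiIter_const_mul r s (j+1) (fun t => u t ^ (n-1-j) * v t ^ j) (((j:ℕ)+1 : ℕ) : ℝ),
            ih (by omega)]
        funext t; simp
  have hdecomp : n = (n - (k + 1)) + (k + 1) := by omega
  have h3 := PsiIter_add r s (n - (k + 1)) (k + 1) (fun t => u t ^ (n - 1 - k) * v t ^ k)
  rw [key k hk, PsiIter_zero_fun, ← hdecomp] at h3
  exact congrFun h3 x
end

section
/- Let n ≥ 1, let u, v, q : ℝ → ℝ be smooth with u nonvanishing, u'' + q·u = 0 and v'' + q·v = 0 on ℝ, and u·v' − u'·v = 1 on ℝ. Suppose a₂, …, aₙ : ℝ → ℝ are continuous coefficients such that each of the n functions y_k = u^{n−1−k}·v^k (0 ≤ k ≤ n−1) satisfies the n-th order linear equation in normal form y^{(n)} + Σ_{j=2}^{n} a_j·y^{(n−j)} = 0 on ℝ. Then the equation is iterative: for every smooth y : ℝ → ℝ and every x ∈ ℝ, y^{(n)}(x) + Σ_{j=2}^{n} a_j(x)·y^{(n−j)}(x) = Ψⁿ[y](x) / u(x)^{2n}, where Ψ is taken with r = u² and s = −(n−1)·u·u'. (This is the converse direction of the theorem: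 a linear equation is iterative if and only if it has n linearly independent solutions of the form u^{n−1−k}v^k built from two linearly independent solutions u, v of the second-order source equation.) -/
open scoped ContDiff

lemma one_le_infty : (∞ : WithTop ℕ∞) ≠ 0 := by simp

noncomputable def Cf (u s : ℝ → ℝ) : ℕ → ℕ → ℝ → ℝ
  | 0, i => fun _ => if i = 0 then 1 else 0
  | m+1, i => fun x => u x ^ 2 * deriv (Cf u s m i) x + s x * Cf u s m i x +
      (if i = 0 then 0 else u x ^ 2 * Cf u s m (i - 1) x)

lemma Cf_contDiff (u s : ℝ → ℝ) (hu : ContDiff ℝ ∞ u) (hs : ContDiff ℝ ∞ s) :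
    ∀ m i, ContDiff ℝ ∞ (Cf u s m i) := by
  intro m
  induction m with
  | zero =>
    intro i
    show ContDiff ℝ ∞ (fun _ : ℝ => if i = 0 then (1:ℝ) else 0)
    exact contDiff_const
  | succ m ih =>
    intro i
    show ContDiff ℝ ∞ (fun x => u x ^ 2 * deriv (Cf u s m i) x + s x * Cf u s m i x +
      (if i = 0 then 0 else u x ^ 2 * Cf u s m (i - 1) x))
    have h1 : ContDiff ℝ ∞ (deriv (Cf u s m i)) := (contDiff_infty_iff_deriv.mp (ih i)).2
    have base : ContDiff ℝ ∞ (fun x => u x ^ 2 * deriv (Cf u s m i) x + s x * Cf u s m i x) :=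
      ((hu.pow 2).mul h1).add (hs.mul (ih i))
    rcases eq_or_ne i 0 with h | h
    · simpa [h] using base
    · simp only [h, if_false]
      exact base.add ((hu.pow 2).mul (ih (i-1)))

lemma Cf_eq_zero (u s : ℝ → ℝ) : ∀ m i, m < i → Cf u s m i = fun _ => 0 := by
  intro m
  induction m with
  | zero =>
    intro i hi; funext x
    show (if i = 0 then (1:ℝ) else 0) = 0
    rw [if_neg (by omega : ¬ i = 0)]
  | succ m ih =>
    intro i hi; funext x
    show u x ^ 2 * deriv (Cf u s m i) x + s x * Cf u s m i x +
      (if i = 0 then 0 else u x ^ 2 * Cf u s m (i - 1) x) = 0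
    rw [ih i (by omega), ih (i-1) (by omega)]
    simp [(by omega : i ≠ 0)]

lemma psiIter_succ (r s : ℝ → ℝ) : ∀ (m : ℕ) (y : ℝ → ℝ),
    PsiIter r s (m+1) y = Psi r s (PsiIter r s m y) := by
  intro m
  induction m with
  | zero => intro y; rfl
  | succ m ih =>
    intro y
    show PsiIter r s (m+1) (Psi r s y) = Psi r s (PsiIter r s m (Psi r s y))
    exact ih (Psi r s y)

lemma psiIter_expand (u s : ℝ → ℝ) (hu : ContDiff ℝ ∞ u) (hs : ContDiff ℝ ∞ s)
    (y : ℝ → ℝ) (hy : ContDiff ℝ ∞ y) :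
    ∀ m, PsiIter (fun t => u t ^ 2) s m y =
      fun x => ∑ i ∈ Finset.range (m+1), Cf u s m i x * iteratedDeriv i y x := by
  have hitd : ∀ i, ContDiff ℝ ∞ (iteratedDeriv i y) := by
    intro i; rw [iteratedDeriv_eq_iterate]; exact hy.iterate_deriv i
  intro m
  induction m with
  | zero =>
    funext x
    show y x = _
    simp [Cf, iteratedDeriv_zero]
  | succ m ih =>
    rw [psiIter_succ, ih]
    funext x
    show u x ^ 2 * deriv (fun x => ∑ i ∈ Finset.range (m+1), Cf u s m i x * iteratedDeriv i y x) x
        + s x * (∑ i ∈ Finset.range (m+1), Cf u s m i x * iteratedDeriv i y x) = _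
    have hCd : ∀ i, DifferentiableAt ℝ (Cf u s m i) x :=
      fun i => ((Cf_contDiff u s hu hs m i).differentiable one_le_infty) x
    have hTd : ∀ i, DifferentiableAt ℝ (iteratedDeriv i y) x :=
      fun i => ((hitd i).differentiable one_le_infty) x
    have hterm : ∀ i ∈ Finset.range (m+1),
        DifferentiableAt ℝ (fun x => Cf u s m i x * iteratedDeriv i y x) x :=
      fun i _ => (hCd i).mul (hTd i)
    rw [deriv_fun_sum hterm]
    have hder : ∀ i ∈ Finset.range (m+1),
        deriv (fun x => Cf u s m i x * iteratedDeriv i y x) x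
        = deriv (Cf u s m i) x * iteratedDeriv i y x + Cf u s m i x * iteratedDeriv (i+1) y x := by
      intro i _
      rw [deriv_fun_mul (hCd i) (hTd i), ← iteratedDeriv_succ]
    rw [Finset.sum_congr rfl hder]
    -- now pure sum algebra
    have RHSsplit : ∑ i ∈ Finset.range (m+2), Cf u s (m+1) i x * iteratedDeriv i y x
        = (∑ i ∈ Finset.range (m+2),
            (u x ^ 2 * deriv (Cf u s m i) x + s x * Cf u s m i x) * iteratedDeriv i y x)
          + ∑ i ∈ Finset.range (m+2),
            (if i = 0 then 0 else u x ^ 2 * Cf u s m (i - 1) x) * iteratedDeriv i y x := by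
      rw [← Finset.sum_add_distrib]
      refine Finset.sum_congr rfl (fun i _ => ?_)
      show (u x ^ 2 * deriv (Cf u s m i) x + s x * Cf u s m i x +
        (if i = 0 then 0 else u x ^ 2 * Cf u s m (i - 1) x)) * iteratedDeriv i y x = _
      ring
    rw [RHSsplit]
    have h1 : ∑ i ∈ Finset.range (m+2),
        (u x ^ 2 * deriv (Cf u s m i) x + s x * Cf u s m i x) * iteratedDeriv i y x
        = ∑ i ∈ Finset.range (m+1),
        (u x ^ 2 * deriv (Cf u s m i) x + s x * Cf u s m i x) * iteratedDeriv i y x := by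
      rw [Finset.sum_range_succ]
      have hz : Cf u s m (m+1) = fun _ => (0:ℝ) := Cf_eq_zero u s m (m+1) (by omega)
      rw [hz]
      simp
    have h2 : ∑ i ∈ Finset.range (m+2),
        (if i = 0 then 0 else u x ^ 2 * Cf u s m (i - 1) x) * iteratedDeriv i y x
        = ∑ i ∈ Finset.range (m+1), (u x ^ 2 * Cf u s m i x) * iteratedDeriv (i+1) y x := by
      rw [Finset.sum_range_succ']
      simp
    rw [h1, h2, Finset.mul_sum, Finset.mul_sum, ← Finset.sum_add_distrib, ← Finset.sum_add_distrib]
    refine Finset.sum_congr rfl (fun i _ => ?_)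
    ring

lemma Cf_diag (u s : ℝ → ℝ) : ∀ m, Cf u s m m = fun x => u x ^ (2*m) := by
  intro m
  induction m with
  | zero => funext x; show (if (0:ℕ) = 0 then (1:ℝ) else 0) = _; simp
  | succ m ih =>
    funext x
    show u x ^ 2 * deriv (Cf u s m (m+1)) x + s x * Cf u s m (m+1) x +
      (if m + 1 = 0 then 0 else u x ^ 2 * Cf u s m (m+1-1) x) = u x ^ (2*(m+1))
    rw [Cf_eq_zero u s m (m+1) (by omega)]
    simp only [Nat.add_sub_cancel, deriv_const', mul_zero, zero_add, Nat.succ_ne_zero, if_false, ih]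
    rw [← pow_add]
    congr 1
    omega

lemma Cf_subdiag (u : ℝ → ℝ) (hu : ContDiff ℝ ∞ u) (c : ℝ) :
    ∀ m, Cf u (fun t => -c * u t * deriv u t) (m+1) m
      = fun x => ((m:ℝ)+1) * ((m:ℝ)-c) * (u x ^ (2*m+1) * deriv u x) := by
  set s : ℝ → ℝ := fun t => -c * u t * deriv u t with hs_def
  intro m
  induction m with
  | zero =>
    funext x
    show u x ^ 2 * deriv (Cf u s 0 0) x + s x * Cf u s 0 0 x + _ = _
    have h0 : Cf u s 0 0 = fun _ : ℝ => (1:ℝ) := by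
      funext t; show (if (0:ℕ) = 0 then (1:ℝ) else 0) = 1; simp
    rw [h0]
    simp only [deriv_const', mul_zero, zero_add, mul_one, if_true, add_zero, hs_def]
    push_cast
    ring
  | succ m ih =>
    funext x
    show u x ^ 2 * deriv (Cf u s (m+1) (m+1)) x + s x * Cf u s (m+1) (m+1) x +
      (if m + 1 = 0 then 0 else u x ^ 2 * Cf u s (m+1) (m+1-1) x) = _
    rw [Cf_diag u s (m+1)]
    simp only [Nat.add_sub_cancel, Nat.succ_ne_zero, if_false, ih]
    have hd : deriv (fun x => u x ^ (2*(m+1))) x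
        = (2*(m+1) : ℕ) * u x ^ (2*(m+1) - 1) * deriv u x :=
      deriv_fun_pow ((hu.differentiable one_le_infty) x) _
    rw [hd]
    have e1 : 2*(m+1) - 1 = 2*m+1 := by omega
    have e2 : 2*(m+1) = 2*m+1+1 := by omega
    rw [e1, e2]
    simp only [hs_def, pow_succ]
    push_cast
    ring

lemma itd_sum (F : Finset ℕ) (c : ℕ → ℝ) :
    ∀ (m : ℕ) (f : ℕ → ℝ → ℝ), (∀ k ∈ F, ContDiff ℝ ∞ (f k)) → ∀ x : ℝ,
      iteratedDeriv m (fun t => ∑ k ∈ F, c k * f k t) x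
        = ∑ k ∈ F, c k * iteratedDeriv m (f k) x := by
  intro m
  induction m with
  | zero => intro f _ x; simp [iteratedDeriv_zero]
  | succ m ih =>
    intro f hf x
    simp only [iteratedDeriv_succ']
    have hder : deriv (fun t => ∑ k ∈ F, c k * f k t) = fun t => ∑ k ∈ F, c k * deriv (f k) t := by
      funext t
      rw [deriv_fun_sum (fun k hk => ((hf k hk).differentiable one_le_infty t).const_mul (c k))]
      exact Finset.sum_congr rfl (fun k hk =>
        deriv_const_mul (c k) ((hf k hk).differentiable one_le_infty t))
    rw [hder]
    exact ih (fun k => deriv (f k)) (fun k hk => (contDiff_infty_iff_deriv.mp (hf k hk)).2) x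

lemma jet_pow_mul (f : ℝ → ℝ) (hf : ContDiff ℝ ∞ f) (x : ℝ) (hfx : f x = 0) :
    ∀ (i m : ℕ) (h : ℝ → ℝ), ContDiff ℝ ∞ h → i ≤ m →
      iteratedDeriv i (fun t => f t ^ m * h t) x
        = if i = m then (i.factorial : ℝ) * deriv f x ^ i * h x else 0 := by
  intro i
  induction i with
  | zero =>
    intro m h hh hm
    rw [iteratedDeriv_zero]
    rcases Nat.eq_zero_or_pos m with hm0 | hm0
    · subst hm0; simp
    · rw [if_neg (by omega), hfx, zero_pow (by omega), zero_mul]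
  | succ i ih =>
    intro m h hh him
    obtain ⟨m', rfl⟩ : ∃ m', m = m' + 1 := ⟨m - 1, by omega⟩
    rw [iteratedDeriv_succ']
    have hfd : Differentiable ℝ f := hf.differentiable one_le_infty
    have hhd : Differentiable ℝ h := hh.differentiable one_le_infty
    have hder : deriv (fun t => f t ^ (m'+1) * h t)
        = fun t => f t ^ m' * (((m':ℝ)+1) * deriv f t * h t + f t * deriv h t) := by
      funext t
      have h1 : HasDerivAt (fun t => f t ^ (m'+1))
          (((m'+1 : ℕ):ℝ) * f t ^ (m'+1-1) * deriv f t) t := (hfd t).hasDerivAt.pow (m'+1)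
      have h2 := (h1.fun_mul (hhd t).hasDerivAt).deriv
      rw [h2]
      simp only [Nat.add_sub_cancel]
      push_cast
      ring
    rw [hder]
    have hh' : ContDiff ℝ ∞ (fun t => ((m':ℝ)+1) * deriv f t * h t + f t * deriv h t) := by
      have hdf : ContDiff ℝ ∞ (deriv f) := (contDiff_infty_iff_deriv.mp hf).2
      have hdh : ContDiff ℝ ∞ (deriv h) := (contDiff_infty_iff_deriv.mp hh).2
      exact ((contDiff_const.mul hdf).mul hh).add (hf.mul hdh)
    rw [ih m' _ hh' (by omega)]
    rcases eq_or_ne i m' with rfl | hne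
    · rw [if_pos rfl, if_pos rfl, hfx]
      simp only [Nat.factorial_succ]
      push_cast
      ring
    · rw [if_neg hne, if_neg (by omega)]

section Gsect

variable (u v : ℝ → ℝ) (N : ℕ)

lemma w_hasDeriv (hu : ContDiff ℝ ∞ u) (hv : ContDiff ℝ ∞ v) (hu0 : ∀ x : ℝ, u x ≠ 0)
    (hwr : ∀ x : ℝ, u x * deriv v x - deriv u x * v x = 1) (t : ℝ) :
    HasDerivAt (fun t => v t / u t) (1 / u t ^ 2) t := by
  have h := ((hv.differentiable one_le_infty t).hasDerivAt).div
    ((hu.differentiable one_le_infty t).hasDerivAt) (hu0 t)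
  have he : (deriv v t * u t - v t * deriv u t) / u t ^ 2 = 1 / u t ^ 2 := by
    have : deriv v t * u t - v t * deriv u t = 1 := by linear_combination hwr t
    rw [this]
  rwa [he] at h

lemma psi_G (hu : ContDiff ℝ ∞ u) (hv : ContDiff ℝ ∞ v) (hu0 : ∀ x : ℝ, u x ≠ 0)
    (hwr : ∀ x : ℝ, u x * deriv v x - deriv u x * v x = 1) (p : Polynomial ℝ) :
    Psi (fun t => u t ^ 2) (fun t => -(N:ℝ) * u t * deriv u t)
      (fun t => u t ^ N * p.eval (v t / u t))
    = fun t => u t ^ N * p.derivative.eval (v t / u t) := by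
  funext t
  have hU : HasDerivAt (fun t => u t ^ N) (((N:ℕ):ℝ) * u t ^ (N-1) * deriv u t) t :=
    ((hu.differentiable one_le_infty t).hasDerivAt).pow N
  have hP : HasDerivAt (fun t => p.eval (v t / u t))
      (p.derivative.eval (v t / u t) * (1 / u t ^ 2)) t :=
    HasDerivAt.comp (h₂ := fun x => p.eval x) t (Polynomial.hasDerivAt p (v t / u t)) (w_hasDeriv u v hu hv hu0 hwr t)
  have hM := (hU.fun_mul hP).deriv
  show u t ^ 2 * deriv (fun t => u t ^ N * p.eval (v t / u t)) t
      + (-(N:ℝ) * u t * deriv u t) * (u t ^ N * p.eval (v t / u t)) = _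
  rw [hM]
  rcases Nat.eq_zero_or_pos N with rfl | hN
  · simp only [pow_zero, Nat.cast_zero, zero_mul, mul_zero, neg_zero, one_mul, zero_add]
    rw [add_zero, mul_comm (Polynomial.eval _ _), ← mul_assoc, mul_one_div,
      div_self (pow_ne_zero 2 (hu0 t)), one_mul]
  · obtain ⟨M, rfl⟩ : ∃ M, N = M + 1 := ⟨N - 1, by omega⟩
    simp only [Nat.add_sub_cancel]
    have hut := hu0 t
    field_simp
    ring

lemma psiIter_G (hu : ContDiff ℝ ∞ u) (hv : ContDiff ℝ ∞ v) (hu0 : ∀ x : ℝ, u x ≠ 0)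
    (hwr : ∀ x : ℝ, u x * deriv v x - deriv u x * v x = 1) :
    ∀ (m : ℕ) (p : Polynomial ℝ),
      PsiIter (fun t => u t ^ 2) (fun t => -(N:ℝ) * u t * deriv u t) m
        (fun t => u t ^ N * p.eval (v t / u t))
      = fun t => u t ^ N * ((Polynomial.derivative)^[m] p).eval (v t / u t) := by
  intro m
  induction m with
  | zero => intro p; rfl
  | succ m ih =>
    intro p
    show PsiIter _ _ m (Psi _ _ _) = _
    rw [psi_G u v N hu hv hu0 hwr p, ih p.derivative, Function.iterate_succ_apply]

end Gsect

noncomputable def psiTest (u v : ℝ → ℝ) (x : ℝ) (N m : ℕ) : ℝ → ℝ :=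
  fun t => (-(v x) * u t + u x * v t) ^ m * (deriv v x * u t + -(deriv u x) * v t) ^ (N - m)

noncomputable def pmPoly (u v : ℝ → ℝ) (x : ℝ) (N m : ℕ) : Polynomial ℝ :=
  (Polynomial.C (-(v x)) + Polynomial.C (u x) * Polynomial.X) ^ m *
    (Polynomial.C (deriv v x) + Polynomial.C (-(deriv u x)) * Polynomial.X) ^ (N - m)

lemma pmPoly_deg (u v : ℝ → ℝ) (x : ℝ) (N m : ℕ) (hm : m ≤ N) :
    (pmPoly u v x N m).natDegree ≤ N := by
  have h1 : ∀ (α β : ℝ), (Polynomial.C α + Polynomial.C β * Polynomial.X).natDegree ≤ 1 := by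
    intro α β
    refine (Polynomial.natDegree_add_le _ _).trans ?_
    simp only [Polynomial.natDegree_C]
    refine max_le (by omega) ((Polynomial.natDegree_mul_le).trans ?_)
    simp [Polynomial.natDegree_C, Polynomial.natDegree_X]
  refine (Polynomial.natDegree_mul_le).trans ?_
  have h2 := (Polynomial.natDegree_pow_le (p := Polynomial.C (-(v x)) + Polynomial.C (u x) * Polynomial.X) (n := m)).trans
    (Nat.mul_le_mul_left m (h1 _ _))
  have h3 := (Polynomial.natDegree_pow_le (p := Polynomial.C (deriv v x) + Polynomial.C (-(deriv u x)) * Polynomial.X) (n := N - m)).trans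
    (Nat.mul_le_mul_left (N - m) (h1 _ _))
  omega

lemma psiTest_eval (u v : ℝ → ℝ) (hu0 : ∀ x : ℝ, u x ≠ 0) (x : ℝ) (N m : ℕ) (hm : m ≤ N) :
    (fun t => u t ^ N * (pmPoly u v x N m).eval (v t / u t)) = psiTest u v x N m := by
  funext t
  simp only [pmPoly, psiTest, Polynomial.eval_mul, Polynomial.eval_pow, Polynomial.eval_add,
    Polynomial.eval_C, Polynomial.eval_X]
  have hA : u t * (-(v x) + u x * (v t / u t)) = -(v x) * u t + u x * v t := by
    field_simp [hu0 t]
  have hB : u t * (deriv v x + -(deriv u x) * (v t / u t)) = deriv v x * u t + -(deriv u x) * v t := by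
    field_simp [hu0 t]
  calc u t ^ N * ((-(v x) + u x * (v t / u t)) ^ m * (deriv v x + -(deriv u x) * (v t / u t)) ^ (N - m))
      = (u t * (-(v x) + u x * (v t / u t))) ^ m *
          (u t * (deriv v x + -(deriv u x) * (v t / u t))) ^ (N - m) := by
        rw [mul_pow, mul_pow, ← pow_sub_mul_pow (u t) hm]; ring
    _ = _ := by rw [hA, hB]

lemma psiTest_jet (u v : ℝ → ℝ) (hu : ContDiff ℝ ∞ u) (hv : ContDiff ℝ ∞ v)
    (hwr : ∀ x : ℝ, u x * deriv v x - deriv u x * v x = 1) (x : ℝ) (N m i : ℕ) (him : i ≤ m) :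
    iteratedDeriv i (psiTest u v x N m) x
      = if i = m then (i.factorial : ℝ) else 0 := by
  have hud := hu.differentiable one_le_infty
  have hvd := hv.differentiable one_le_infty
  have hf : ContDiff ℝ ∞ (fun t => -(v x) * u t + u x * v t) :=
    (contDiff_const.mul hu).add (contDiff_const.mul hv)
  have hh : ContDiff ℝ ∞ (fun t => (deriv v x * u t + -(deriv u x) * v t) ^ (N - m)) :=
    ((contDiff_const.mul hu).add (contDiff_const.mul hv)).pow _
  have hfx : (fun t => -(v x) * u t + u x * v t) x = 0 := by simp; ring
  have hder : HasDerivAt (fun t => -(v x) * u t + u x * v t)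
      (-(v x) * deriv u x + u x * deriv v x) x :=
    (((hud x).hasDerivAt).const_mul (-(v x))).add (((hvd x).hasDerivAt).const_mul (u x))
  have hder1 : deriv (fun t => -(v x) * u t + u x * v t) x = 1 := by
    rw [hder.deriv]; linear_combination hwr x
  have hchi : (deriv v x * u x + -(deriv u x * v x)) = 1 := by linear_combination hwr x
  have := jet_pow_mul (fun t => -(v x) * u t + u x * v t) hf x hfx i m
    (fun t => (deriv v x * u t + -(deriv u x) * v t) ^ (N - m)) hh him
  rw [show psiTest u v x N m = fun t => (-(v x) * u t + u x * v t) ^ m *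
      ((deriv v x * u t + -(deriv u x) * v t) ^ (N - m)) from rfl]
  rw [this, hder1]
  simp [hchi]

/-- Converse characterization: if each y_k = u^{n−1−k}·v^k (0 ≤ k ≤ n−1), built from
unit-Wronskian solutions u, v of the source equation, solves the normal-form equation
y^{(n)} + ∑_{j=2}^{n} a_j y^{(n−j)} = 0, then the equation is iterative:
its left-hand side equals Ψⁿ[y]/u^{2n} with r = u², s = −(n−1)uu'. -/
theorem normal_form_is_iterative (n : ℕ) (hn : 1 ≤ n)
    (u v q : ℝ → ℝ)
    (hu : ContDiff ℝ (⊤ : ℕ∞) u) (hv : ContDiff ℝ (⊤ : ℕ∞) v) (hq : ContDiff ℝ (⊤ : ℕ∞) q)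
    (hu0 : ∀ x : ℝ, u x ≠ 0)
    (hodeu : ∀ x : ℝ, deriv (deriv u) x + q x * u x = 0)
    (hodev : ∀ x : ℝ, deriv (deriv v) x + q x * v x = 0)
    (hwr : ∀ x : ℝ, u x * deriv v x - deriv u x * v x = 1)
    (a : ℕ → ℝ → ℝ) (ha : ∀ j, 2 ≤ j → j ≤ n → Continuous (a j))
    (hsol : ∀ k, k ≤ n - 1 → ∀ x : ℝ,
      iteratedDeriv n (fun t => u t ^ (n - 1 - k) * v t ^ k) x +
        ∑ j ∈ Finset.Icc 2 n,
          a j x * iteratedDeriv (n - j) (fun t => u t ^ (n - 1 - k) * v t ^ k) x = 0) :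
    ∀ y : ℝ → ℝ, ContDiff ℝ (⊤ : ℕ∞) y → ∀ x : ℝ,
      iteratedDeriv n y x +
        ∑ j ∈ Finset.Icc 2 n, a j x * iteratedDeriv (n - j) y x =
      PsiIter (fun t => u t ^ 2) (fun t => -((n : ℝ) - 1) * u t * deriv u t) n y x /
        u x ^ (2 * n) := by
  obtain ⟨N, rfl⟩ : ∃ N, n = N + 1 := ⟨n - 1, by omega⟩
  simp only [Nat.add_sub_cancel] at hsol
  intro y hy x
  have hu' : ContDiff ℝ ∞ u := hu.of_le (by simp)
  have hv' : ContDiff ℝ ∞ v := hv.of_le (by simp)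
  have hy' : ContDiff ℝ ∞ y := hy.of_le (by simp)
  have hsEq : (fun t => -((((N + 1 : ℕ)) : ℝ) - 1) * u t * deriv u t)
      = (fun t => -((N : ℕ) : ℝ) * u t * deriv u t) := by
    funext t; push_cast; ring
  rw [hsEq]
  set s0 : ℝ → ℝ := fun t => -((N : ℕ) : ℝ) * u t * deriv u t with hs0def
  have hs0 : ContDiff ℝ ∞ s0 := by
    rw [hs0def]
    exact (contDiff_const.mul hu').mul (contDiff_infty_iff_deriv.mp hu').2
  have hdiag := Cf_diag u s0 (N+1)
  have hsub0 : Cf u s0 (N+1) N = fun _ => (0:ℝ) := by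
    have h := Cf_subdiag u hu' ((N : ℕ) : ℝ) N
    rw [← hs0def] at h
    rw [h]; funext t; simp
  have hre : ∀ F : ℕ → ℝ, ∑ i ∈ Finset.range N, F i = ∑ j ∈ Finset.Icc 2 (N+1), F (N+1-j) := by
    intro F
    refine Finset.sum_nbij' (i := fun i => N+1-i) (j := fun j => N+1-j) ?_ ?_ ?_ ?_ ?_
    · intro a ha; simp only [Finset.mem_range] at ha; simp only [Finset.mem_Icc]; omega
    · intro a ha; simp only [Finset.mem_Icc] at ha; simp only [Finset.mem_range]; omega
    · intro a ha; simp only [Finset.mem_range] at ha; show N+1-(N+1-a) = a; omega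
    · intro a ha; simp only [Finset.mem_Icc] at ha; show N+1-(N+1-a) = a; omega
    · intro a ha; simp only [Finset.mem_range] at ha
      rw [show N+1-(N+1-a) = a by omega]
  have hM : ∀ (z : ℝ → ℝ), ContDiff ℝ ∞ z → ∀ t : ℝ,
      iteratedDeriv (N+1) z t + ∑ j ∈ Finset.Icc 2 (N+1),
        (Cf u s0 (N+1) (N+1-j) t / u t ^ (2*(N+1))) * iteratedDeriv (N+1-j) z t
      = PsiIter (fun t => u t ^ 2) s0 (N+1) z t / u t ^ (2*(N+1)) := by
    intro z hz t
    have hD : u t ^ (2*(N+1)) ≠ 0 := pow_ne_zero _ (hu0 t)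
    have hexp := congrFun (psiIter_expand u s0 hu' hs0 z hz (N+1)) t
    rw [hexp, Finset.sum_range_succ, Finset.sum_range_succ]
    simp only [hsub0, hdiag, zero_mul, add_zero]
    rw [add_div, mul_div_cancel_left₀ _ hD, Finset.sum_div]
    rw [hre (fun i => Cf u s0 (N+1) i t * iteratedDeriv i z t / u t ^ (2*(N+1)))]
    rw [Finset.sum_congr rfl (fun j (_ : j ∈ Finset.Icc 2 (N+1)) =>
      mul_div_right_comm (Cf u s0 (N+1) (N+1-j) t) (iteratedDeriv (N+1-j) z t) (u t ^ (2*(N+1))))]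
    ring
  have hSG : ∀ k, k ≤ N → (fun t => u t ^ (N-k) * v t ^ k)
      = (fun t => u t ^ N * ((Polynomial.X : Polynomial ℝ)^k).eval (v t / u t)) := by
    intro k hk; funext t
    rw [Polynomial.eval_pow, Polynomial.eval_X, div_pow, ← pow_sub_mul_pow (u t) hk,
      mul_right_comm, mul_assoc, div_mul_cancel₀ _ (pow_ne_zero k (hu0 t))]
  have hPsi0 : ∀ k, k ≤ N → PsiIter (fun t => u t ^ 2) s0 (N+1)
      (fun t => u t ^ (N-k) * v t ^ k) = fun _ => (0:ℝ) := by
    intro k hk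
    rw [hSG k hk, hs0def, psiIter_G u v N hu' hv' hu0 hwr (N+1) (Polynomial.X ^ k)]
    have hzero : (Polynomial.derivative (R := ℝ))^[N+1] (Polynomial.X ^ k) = 0 :=
      Polynomial.iterate_derivative_eq_zero (by rw [Polynomial.natDegree_X_pow]; omega)
    rw [hzero]; funext t; simp
  have hGsum : ∀ p : Polynomial ℝ, p.natDegree ≤ N →
      (fun t => u t ^ N * p.eval (v t / u t))
      = fun t => ∑ k ∈ Finset.range (N+1), p.coeff k * (u t ^ (N-k) * v t ^ k) := by
    intro p hp; funext t
    rw [Polynomial.eval_eq_sum_range' (Nat.lt_succ_of_le hp), Finset.mul_sum]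
    refine Finset.sum_congr rfl (fun k hk => ?_)
    have hk' : k ≤ N := Nat.lt_succ_iff.mp (Finset.mem_range.mp hk)
    have h := congrFun (hSG k hk') t
    simp only [Polynomial.eval_pow, Polynomial.eval_X] at h
    rw [mul_left_comm, ← h]
  set d : ℕ → ℝ := fun j => a j x - Cf u s0 (N+1) (N+1-j) x / u x ^ (2*(N+1)) with hddef
  have hScd : ∀ k : ℕ, ContDiff ℝ ∞ (fun t => u t ^ (N-k) * v t ^ k) :=
    fun k => (hu'.pow _).mul (hv'.pow _)
  have hLamS : ∀ k, k ≤ N → ∑ j ∈ Finset.Icc 2 (N+1),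
      d j * iteratedDeriv (N+1-j) (fun t => u t ^ (N-k) * v t ^ k) x = 0 := by
    intro k hk
    have h1 := hsol k (by omega) x
    have h2 := hM (fun t => u t ^ (N-k) * v t ^ k) (hScd k) x
    rw [congrFun (hPsi0 k hk) x, zero_div] at h2
    have h3 : ∑ j ∈ Finset.Icc 2 (N+1), d j * iteratedDeriv (N+1-j) (fun t => u t ^ (N-k) * v t ^ k) x
        = (∑ j ∈ Finset.Icc 2 (N+1), a j x * iteratedDeriv (N+1-j) (fun t => u t ^ (N-k) * v t ^ k) x)
          - ∑ j ∈ Finset.Icc 2 (N+1), (Cf u s0 (N+1) (N+1-j) x / u x ^ (2*(N+1))) *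
              iteratedDeriv (N+1-j) (fun t => u t ^ (N-k) * v t ^ k) x := by
      rw [← Finset.sum_sub_distrib]
      exact Finset.sum_congr rfl (fun j _ => by simp only [hddef]; ring)
    rw [h3]; linarith [h1, h2]
  have hLamPoly : ∀ p : Polynomial ℝ, p.natDegree ≤ N →
      ∑ j ∈ Finset.Icc 2 (N+1),
        d j * iteratedDeriv (N+1-j) (fun t => u t ^ N * p.eval (v t / u t)) x = 0 := by
    intro p hp
    rw [hGsum p hp]
    have hsum : ∀ mm : ℕ, iteratedDeriv mm
        (fun t => ∑ k ∈ Finset.range (N+1), p.coeff k * (u t ^ (N-k) * v t ^ k)) x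
        = ∑ k ∈ Finset.range (N+1), p.coeff k *
            iteratedDeriv mm (fun t => u t ^ (N-k) * v t ^ k) x :=
      fun mm => itd_sum _ _ mm _ (fun k _ => hScd k) x
    calc ∑ j ∈ Finset.Icc 2 (N+1), d j * iteratedDeriv (N+1-j)
            (fun t => ∑ k ∈ Finset.range (N+1), p.coeff k * (u t ^ (N-k) * v t ^ k)) x
        = ∑ j ∈ Finset.Icc 2 (N+1), ∑ k ∈ Finset.range (N+1),
            p.coeff k * (d j * iteratedDeriv (N+1-j) (fun t => u t ^ (N-k) * v t ^ k) x) := by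
          refine Finset.sum_congr rfl (fun j _ => ?_)
          rw [hsum (N+1-j), Finset.mul_sum]
          exact Finset.sum_congr rfl (fun k _ => by ring)
      _ = ∑ k ∈ Finset.range (N+1), p.coeff k * (∑ j ∈ Finset.Icc 2 (N+1),
            d j * iteratedDeriv (N+1-j) (fun t => u t ^ (N-k) * v t ^ k) x) := by
          rw [Finset.sum_comm]
          exact Finset.sum_congr rfl (fun k _ => by rw [Finset.mul_sum])
      _ = 0 := by
          refine Finset.sum_eq_zero (fun k hk => ?_)
          rw [hLamS k (Nat.lt_succ_iff.mp (Finset.mem_range.mp hk)), mul_zero]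
  have hLamPsi : ∀ m, m ≤ N → ∑ j ∈ Finset.Icc 2 (N+1),
      d j * iteratedDeriv (N+1-j) (psiTest u v x N m) x = 0 := by
    intro m hm
    rw [← psiTest_eval u v hu0 x N m hm]
    exact hLamPoly (pmPoly u v x N m) (pmPoly_deg u v x N m hm)
  have hKey : ∀ (T : ℕ), ∀ i, i < N → N - 1 - i ≤ T → d (N+1-i) = 0 := by
    intro T
    induction T with
    | zero =>
      intro i hiN hT
      have e1 := hre (fun i' => d (N+1-i') * iteratedDeriv i' (psiTest u v x N i) x)
      have e2 : ∑ j ∈ Finset.Icc 2 (N+1), d (N+1-(N+1-j)) *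
            iteratedDeriv (N+1-j) (psiTest u v x N i) x
          = ∑ j ∈ Finset.Icc 2 (N+1), d j * iteratedDeriv (N+1-j) (psiTest u v x N i) x :=
        Finset.sum_congr rfl (fun j hj => by
          have hj' := Finset.mem_Icc.mp hj
          rw [show N+1-(N+1-j) = j by omega])
      have heq : ∑ i' ∈ Finset.range N, d (N+1-i') * iteratedDeriv i' (psiTest u v x N i) x = 0 := by
        rw [e1, e2]; exact hLamPsi i (le_of_lt hiN)
      have hsingle : ∑ i' ∈ Finset.range N, d (N+1-i') * iteratedDeriv i' (psiTest u v x N i) x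
          = d (N+1-i) * iteratedDeriv i (psiTest u v x N i) x := by
        refine Finset.sum_eq_single_of_mem i (Finset.mem_range.mpr hiN) ?_
        intro b hb hbne
        have hb' := Finset.mem_range.mp hb
        rcases lt_or_gt_of_ne hbne with hlt | hgt
        · rw [psiTest_jet u v hu' hv' hwr x N i b (le_of_lt hlt), if_neg (by omega), mul_zero]
        · exact absurd hgt (by omega)
      rw [hsingle, psiTest_jet u v hu' hv' hwr x N i i le_rfl, if_pos rfl] at heq
      have hfac : (Nat.factorial i : ℝ) ≠ 0 := Nat.cast_ne_zero.mpr (Nat.factorial_ne_zero i)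
      exact (mul_eq_zero.mp heq).resolve_right hfac
    | succ T ih =>
      intro i hiN hT
      have e1 := hre (fun i' => d (N+1-i') * iteratedDeriv i' (psiTest u v x N i) x)
      have e2 : ∑ j ∈ Finset.Icc 2 (N+1), d (N+1-(N+1-j)) *
            iteratedDeriv (N+1-j) (psiTest u v x N i) x
          = ∑ j ∈ Finset.Icc 2 (N+1), d j * iteratedDeriv (N+1-j) (psiTest u v x N i) x :=
        Finset.sum_congr rfl (fun j hj => by
          have hj' := Finset.mem_Icc.mp hj
          rw [show N+1-(N+1-j) = j by omega])
      have heq : ∑ i' ∈ Finset.range N, d (N+1-i') * iteratedDeriv i' (psiTest u v x N i) x = 0 := by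
        rw [e1, e2]; exact hLamPsi i (le_of_lt hiN)
      have hsingle : ∑ i' ∈ Finset.range N, d (N+1-i') * iteratedDeriv i' (psiTest u v x N i) x
          = d (N+1-i) * iteratedDeriv i (psiTest u v x N i) x := by
        refine Finset.sum_eq_single_of_mem i (Finset.mem_range.mpr hiN) ?_
        intro b hb hbne
        have hb' := Finset.mem_range.mp hb
        rcases lt_or_gt_of_ne hbne with hlt | hgt
        · rw [psiTest_jet u v hu' hv' hwr x N i b (le_of_lt hlt), if_neg (by omega), mul_zero]
        · rw [ih b (by omega) (by omega), zero_mul]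
      rw [hsingle, psiTest_jet u v hu' hv' hwr x N i i le_rfl, if_pos rfl] at heq
      have hfac : (Nat.factorial i : ℝ) ≠ 0 := Nat.cast_ne_zero.mpr (Nat.factorial_ne_zero i)
      exact (mul_eq_zero.mp heq).resolve_right hfac
  have hcoef : ∀ j ∈ Finset.Icc 2 (N+1),
      a j x = Cf u s0 (N+1) (N+1-j) x / u x ^ (2*(N+1)) := by
    intro j hj
    have hj' := Finset.mem_Icc.mp hj
    have h := hKey N (N+1-j) (by omega) (by omega)
    rw [show N+1-(N+1-j) = j by omega] at h
    simp only [hddef] at h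
    linarith [h]
  rw [← hM y hy' x]
  congr 1
  exact Finset.sum_congr rfl (fun j hj => by rw [hcoef j hj])
end
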